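/- For every y, t > 0, the function u ↦ −(exp(−y²/(2t))/√(2πt)) · erf((y/√(2t))·√(t−u)/√u) on (0,t) has derivative u ↦ (y·exp(−y²/(2u))/√(2πu³)) · (1/√(2π(t−u))). -/

import Mathlib

/-! Chain rule with `erf' x = (2/√π) exp(−x²)`: the two Gaussian factors merge into
`exp(−y²/(2u))` because `y²/(2t) + y²(t − u)/(2tu) = y²/(2u)`. -/

open Real

/-- The error function `erf x = (2/√π) ∫₀ˣ exp(−s²) ds`. -/
noncomputable def erf (x : ℝ) : ℝ := 2 / Real.sqrt π * ∫ s in (0:ℝ)..x, Real.exp (-s ^ 2)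

theorem hasDerivAt_erf (x : ℝ) : HasDerivAt erf (2 / √π * exp (-x ^ 2)) x :=
  ((by fun_prop : Continuous fun s : ℝ => exp (-s ^ 2)).integral_hasStrictDerivAt 0 x
    |>.hasDerivAt.const_mul _)

theorem hasDerivAt_sqrt_sub_div_sqrt {t u : ℝ} (hu : 0 < u) (hut : u < t) :
    HasDerivAt (fun v => √(t - v) / √v) (-(t / (2 * u * √u * √(t - u)))) u := by
  have htu : 0 < t - u := sub_pos.2 hut
  have hnum : HasDerivAt (fun v => √(t - v)) (-1 / (2 * √(t - u))) u := by
    simpa using ((hasDerivAt_id u).const_sub t).sqrt htu.ne'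
  refine (hnum.div (hasDerivAt_sqrt hu.ne') (sqrt_pos.2 hu).ne').congr_deriv ?_
  field_simp
  rw [sq_sqrt hu.le, sq_sqrt htu.le]
  ring

theorem neg_sq_div_two_mul_add_neg_sq_mul_sqrt_div {y t u : ℝ} (ht : 0 < t) (hu : 0 < u)
    (hut : u < t) :
    -(y ^ 2) / (2 * t) + -(y / √(2 * t) * (√(t - u) / √u)) ^ 2 = -(y ^ 2) / (2 * u) := by
  rw [mul_pow, div_pow, div_pow, sq_sqrt (by positivity), sq_sqrt (sub_pos.2 hut).le,
    sq_sqrt hu.le]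
  field_simp
  ring

theorem sqrt_two_pi_mul_pow_three_mul_sqrt {u : ℝ} (hu : 0 < u) (s : ℝ) :
    √(2 * π * u ^ 3) * √(2 * π * s) = 2 * π * u * √u * √s := by
  rw [← sqrt_mul (by positivity),
    show 2 * π * u ^ 3 * (2 * π * s) = (2 * π * u) ^ 2 * (u * s) by ring, sqrt_mul (by positivity), sqrt_sq (by positivity), sqrt_mul hu.le]
  ring

theorem hasDerivAt_erf_antiderivative_general (y t : ℝ) (ht : 0 < t) :
    ∀ u ∈ Set.Ioo (0:ℝ) t,
      HasDerivAt
        (fun u : ℝ =>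
          -(Real.exp (-(y ^ 2) / (2 * t)) / Real.sqrt (2 * π * t)) *
            erf (y / Real.sqrt (2 * t) * (Real.sqrt (t - u) / Real.sqrt u)))
        ((y * Real.exp (-(y ^ 2) / (2 * u)) / Real.sqrt (2 * π * u ^ 3)) *
          (1 / Real.sqrt (2 * π * (t - u)))) u := by
  rintro u ⟨hu, hut⟩
  have hderiv := ((hasDerivAt_erf _).comp u
    ((hasDerivAt_sqrt_sub_div_sqrt hu hut).const_mul (y / √(2 * t)))).const_mul
    (-(exp (-(y ^ 2) / (2 * t)) / √(2 * π * t)))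
  refine hderiv.congr_deriv ?_
  rw [← neg_sq_div_two_mul_add_neg_sq_mul_sqrt_div ht hu hut, exp_add, mul_one_div, div_div,
    sqrt_two_pi_mul_pow_three_mul_sqrt hu, show 2 * π * t = 2 * t * π by ring,
    sqrt_mul (by positivity) π]
  have := sqrt_pos.2 hu
  have := sqrt_pos.2 (sub_pos.2 hut)
  have := sqrt_pos.2 (by positivity : 0 < 2 * t)
  field_simp
  rw [sq_sqrt (by positivity), sq_sqrt pi_pos.le]
  ring

/-- Antiderivative identity for the integrand in the Lévy–Gaussian convolution. -/
theorem hasDerivAt_erf_antiderivative (y t : ℝ) (hy : 0 < y) (ht : 0 < t) :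
    ∀ u ∈ Set.Ioo (0:ℝ) t,
      HasDerivAt
        (fun u : ℝ =>
          -(Real.exp (-(y ^ 2) / (2 * t)) / Real.sqrt (2 * π * t)) *
            erf (y / Real.sqrt (2 * t) * (Real.sqrt (t - u) / Real.sqrt u)))
        ((y * Real.exp (-(y ^ 2) / (2 * u)) / Real.sqrt (2 * π * u ^ 3)) *
          (1 / Real.sqrt (2 * π * (t - u)))) u :=
  hasDerivAt_erf_antiderivative_general y t ht
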